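/- Let p be an odd prime and n ≥ 1. For nonzero α, β, γ ∈ 𝔽_p^n with α + β + γ = 0, the identity u_α·u_β + u_β·u_γ + u_γ·u_α = 0 holds in the exterior algebra E. -/

import Mathlib

open MvPolynomial

set_option synthInstance.maxHeartbeats 1000000
set_option maxHeartbeats 1000000

noncomputable section

/-- `K`, the field of fractions of `𝔽_p[x_1, …, x_n]`. -/
abbrev Kf (p n : ℕ) : Type _ := FractionRing (MvPolynomial (Fin n) (ZMod p))

/-- The constant `a ∈ 𝔽_p` regarded as an element of `K`. -/
def cK (p n : ℕ) (a : ZMod p) : Kf p n :=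
  algebraMap (MvPolynomial (Fin n) (ZMod p)) (Kf p n) (C a)

/-- The variable `x_i` regarded as an element of `K`. -/
def xK (p n : ℕ) (i : Fin n) : Kf p n :=
  algebraMap (MvPolynomial (Fin n) (ZMod p)) (Kf p n) (X i)

/-- The linear form `z_α = Σ_i α_i x_i ∈ K`. -/
def zf (p n : ℕ) (α : Fin n → ZMod p) : Kf p n := ∑ i, cK p n (α i) * xK p n i

/-- `t_α = z_α⁻¹ ∈ K`. -/
def tf (p n : ℕ) [Fact (Nat.Prime p)] (α : Fin n → ZMod p) : Kf p n := (zf p n α)⁻¹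

/-- `E`, the exterior algebra over `K` on an `n`-dimensional `K`-vector space
with basis `dx_1, …, dx_n`. -/
abbrev Ef (p n : ℕ) : Type _ := ExteriorAlgebra (Kf p n) (Fin n → Kf p n)

/-- `dx_i ∈ E`. -/
def dxE (p n : ℕ) (i : Fin n) : Ef p n :=
  ExteriorAlgebra.ι (Kf p n) (Pi.single i 1)

/-- `dz_α = Σ_i α_i dx_i ∈ E`. -/
def dzf (p n : ℕ) (α : Fin n → ZMod p) : Ef p n :=
  ∑ i, algebraMap (Kf p n) (Ef p n) (cK p n (α i)) * dxE p n i

/-- `t_α ∈ K ⊆ E`. -/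
def tE (p n : ℕ) [Fact (Nat.Prime p)] (α : Fin n → ZMod p) : Ef p n :=
  algebraMap (Kf p n) (Ef p n) (tf p n α)

/-- `u_α = t_α · dz_α ∈ E`. -/
def uf (p n : ℕ) [Fact (Nat.Prime p)] (α : Fin n → ZMod p) : Ef p n :=
  tE p n α * dzf p n α

/-!
Each product `u_δ u_ε` is `t_δ t_ε · dz_δ ∧ dz_ε`. Since `dz_γ = -(dz_α + dz_β)` and `dz ∧ dz = 0`,
all three wedge products equal `dz_α ∧ dz_β`, so the sum is `(t_α t_β + t_β t_γ + t_γ t_α) · dz_α ∧ dz_β`,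
and the scalar is `(z_α + z_β + z_γ) / (z_α z_β z_γ) = 0`.
-/

namespace ExteriorAlgebra

variable {R M : Type*} [CommRing R] [AddCommGroup M] [Module R M]

theorem ι_mul_ι_eq_of_add_add_eq_zero {a b c : M} (h : a + b + c = 0) :
    ι R b * ι R c = ι R a * ι R b := by
  have hba : ι R b * ι R a = -(ι R a * ι R b) :=
    eq_neg_of_add_eq_zero_right (ι_add_mul_swap a b)
  rw [eq_neg_of_add_eq_zero_right h, map_neg, map_add, mul_neg, mul_add, ι_sq_zero, hba,
    add_zero, neg_neg]

end ExteriorAlgebra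

theorem inv_mul_inv_add_inv_mul_inv_add_inv_mul_inv_eq_zero {K : Type*} [Field K] {a b c : K}
    (ha : a ≠ 0) (hb : b ≠ 0) (hc : c ≠ 0) (h : a + b + c = 0) :
    a⁻¹ * b⁻¹ + b⁻¹ * c⁻¹ + c⁻¹ * a⁻¹ = 0 := by
  field_simp
  linear_combination h

/-- The coordinate vector of `dz_α` in the basis `dx_1, …, dx_n`. -/
def dzVec (p n : ℕ) (α : Fin n → ZMod p) : Fin n → Kf p n := fun i => cK p n (α i)

lemma dzVec_add (p n : ℕ) (α β : Fin n → ZMod p) :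
    dzVec p n (α + β) = dzVec p n α + dzVec p n β := by
  funext i
  simp [dzVec, cK]

lemma dzf_eq_ι (p n : ℕ) (α : Fin n → ZMod p) :
    dzf p n α = ExteriorAlgebra.ι (Kf p n) (dzVec p n α) := by
  have hvec : dzVec p n α = ∑ i, cK p n (α i) • (Pi.single i 1 : Fin n → Kf p n) := by
    funext j
    simp [dzVec, Finset.sum_apply, Pi.single_apply]
  rw [hvec, map_sum]
  refine Finset.sum_congr rfl fun i _ => ?_
  rw [map_smul, Algebra.smul_def, dxE]

lemma zf_add (p n : ℕ) (α β : Fin n → ZMod p) : zf p n (α + β) = zf p n α + zf p n β := by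
  simp [zf, cK, add_mul, Finset.sum_add_distrib]

lemma zf_ne_zero (p n : ℕ) {α : Fin n → ZMod p} (hα : α ≠ 0) :
    zf p n α ≠ 0 := by
  have hz : zf p n α = algebraMap (MvPolynomial (Fin n) (ZMod p)) (Kf p n)
      (∑ i, C (α i) * X i) := by
    simp [zf, cK, xK, map_sum]
  rw [hz, ne_eq, IsFractionRing.to_map_eq_zero_iff]
  contrapose! hα
  funext j
  simpa [coeff_sum, coeff_C_mul, coeff_X, Finsupp.single_left_inj] using
    congrArg (coeff (Finsupp.single j 1)) hα

lemma uf_mul_uf (p n : ℕ) [Fact (Nat.Prime p)] (α β : Fin n → ZMod p) :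
    uf p n α * uf p n β = (tf p n α * tf p n β) •
      (ExteriorAlgebra.ι (Kf p n) (dzVec p n α) * ExteriorAlgebra.ι (Kf p n) (dzVec p n β)) := by
  simp only [uf, tE, dzf_eq_ι, ← Algebra.smul_def, smul_mul_smul_comm]

theorem stmt2_general (p n : ℕ) [Fact (Nat.Prime p)]
    (α β γ : Fin n → ZMod p) (hα : α ≠ 0) (hβ : β ≠ 0) (hγ : γ ≠ 0)
    (hsum : α + β + γ = 0) :
    uf p n α * uf p n β + uf p n β * uf p n γ + uf p n γ * uf p n α = 0 := by
  have hz : zf p n α + zf p n β + zf p n γ = 0 := by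
    rw [← zf_add, ← zf_add, hsum]
    simp [zf, cK]
  have hv : dzVec p n α + dzVec p n β + dzVec p n γ = 0 := by
    rw [← dzVec_add, ← dzVec_add, hsum]
    funext i
    simp [dzVec, cK]
  have hv' : dzVec p n β + dzVec p n γ + dzVec p n α = 0 := by
    rw [← hv]; abel
  have ht : tf p n α * tf p n β + tf p n β * tf p n γ + tf p n γ * tf p n α = 0 :=
    inv_mul_inv_add_inv_mul_inv_add_inv_mul_inv_eq_zero (zf_ne_zero p n hα)
      (zf_ne_zero p n hβ) (zf_ne_zero p n hγ) hz
  simp only [uf_mul_uf]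
  rw [ExteriorAlgebra.ι_mul_ι_eq_of_add_add_eq_zero hv',
    ExteriorAlgebra.ι_mul_ι_eq_of_add_add_eq_zero hv, ← add_smul, ← add_smul, ht, zero_smul]

/-- For an odd prime `p`, `n ≥ 1`, and nonzero `α, β, γ ∈ 𝔽_p^n` with `α + β + γ = 0`,
the identity `u_α·u_β + u_β·u_γ + u_γ·u_α = 0` holds in `E`. -/
theorem stmt2 (p n : ℕ) [Fact (Nat.Prime p)] (hodd : Odd p) (hn : 1 ≤ n)
    (α β γ : Fin n → ZMod p) (hα : α ≠ 0) (hβ : β ≠ 0) (hγ : γ ≠ 0)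
    (hsum : α + β + γ = 0) :
    uf p n α * uf p n β + uf p n β * uf p n γ + uf p n γ * uf p n α = 0 :=
  stmt2_general p n α β γ hα hβ hγ hsum

end
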